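/- Suppose K in Q[[Q]] has constant coefficient 14 and satisfies: for every y in Q[[q]][t] with L1~ y = 0, D_Q~ ( D_Q~ ( K^{-1} * D_Q~ ( D_Q~ ( T(y) ) ) ) ) = 0. Write K = 14 + sum_{d >= 1} c_d Q^d. Then the (necessarily unique) rational numbers n_1, n_2, n_3, n_4, n_5 satisfying c_d = sum_{k | d} k^3 * n_k for 1 <= d <= 5 are the instanton numbers n_1 = 588, n_2 = 12103, n_3 = 583884, n_4 = 41359136, n_5 = 3609394096. -/

import Mathlib

open PowerSeries

/-- The operator `D = q * d/dq` on `ℚ[[q]]`. -/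
noncomputable def Dop (f : ℚ⟦X⟧) : ℚ⟦X⟧ := X * derivative ℚ f

/-- Coefficient of `D^4` in the Picard-Fuchs operator. -/
noncomputable def A4 : ℚ⟦X⟧ := (1 - 289 * X - 57 * X ^ 2 + X ^ 3) * (1 - 3 * X) ^ 2
/-- Coefficient of `D^3` in the Picard-Fuchs operator. -/
noncomputable def A3 : ℚ⟦X⟧ := 4 * X * (3 * X - 1) * (143 + 57 * X - 87 * X ^ 2 + 3 * X ^ 3)
/-- Coefficient of `D^2` in the Picard-Fuchs operator. -/
noncomputable def A2 : ℚ⟦X⟧ :=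
  2 * X * (-212 - 473 * X + 725 * X ^ 2 - 435 * X ^ 3 + 27 * X ^ 4)
/-- Coefficient of `D^1` in the Picard-Fuchs operator. -/
noncomputable def A1 : ℚ⟦X⟧ :=
  2 * X * (-69 - 481 * X + 159 * X ^ 2 - 171 * X ^ 3 + 18 * X ^ 4)
/-- Coefficient of `D^0` in the Picard-Fuchs operator. -/
noncomputable def A0 : ℚ⟦X⟧ := X * (-17 - 202 * X - 8 * X ^ 2 - 54 * X ^ 3 + 9 * X ^ 4)

/-- The Picard-Fuchs operator of Rødland's mirror family of the Pfaffian
Calabi-Yau 3-fold, acting on `ℚ[[q]]` (here `q` is `PowerSeries.X`). -/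
noncomputable def L1 (f : ℚ⟦X⟧) : ℚ⟦X⟧ :=
  A4 * Dop^[4] f + A3 * Dop^[3] f + A2 * Dop^[2] f + A1 * Dop f + A0 * f

/-- The extension of `D` to the derivation on `ℚ[[q]][t]` with `D t = 1`
(where `t` plays the role of `ln q`). -/
noncomputable def Dt (y : Polynomial ℚ⟦X⟧) : Polynomial ℚ⟦X⟧ :=
  Polynomial.derivative y + y.sum fun n a => Polynomial.C (Dop a) * Polynomial.X ^ n

/-- The Picard-Fuchs operator acting on `ℚ[[q]][t]`, with `D` replaced by its
extension `Dt`. -/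
noncomputable def L1t (y : Polynomial ℚ⟦X⟧) : Polynomial ℚ⟦X⟧ :=
    Polynomial.C A4 * Dt^[4] y + Polynomial.C A3 * Dt^[3] y
  + Polynomial.C A2 * Dt^[2] y + Polynomial.C A1 * Dt y + Polynomial.C A0 * y

/-- Composition `f ∘ g` of formal power series (intended for `g` with zero constant
coefficient, so that the sum below is the genuine substitution of `g` into `f`):
the `k`-th coefficient is `Σ_{n ≤ k} (coeff n f) * coeff k (g^n)`. -/
noncomputable def psComp (f g : ℚ⟦X⟧) : ℚ⟦X⟧ :=
  PowerSeries.mk fun k => ∑ n ∈ Finset.range (k + 1), coeff n f * coeff k (g ^ n)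

/-- The mirror map `μ = q · exp(h)` with `h = g f⁻¹`, where `f = I₀` and
`t f + g = I₁` are the holomorphic and logarithmic solutions. -/
noncomputable def mirrorMap (f g : ℚ⟦X⟧) : ℚ⟦X⟧ := X * psComp (exp ℚ) (g * f⁻¹)

/-- The mirror transform: for `y = Σᵢ tⁱ yᵢ ∈ ℚ[[q]][t]` and `ν` the compositional
inverse of the mirror map, `T(y) = Σᵢ (s - h(ν))ⁱ · ((yᵢ f⁻¹)(ν)) ∈ ℚ[[Q]][s]`,
where `h = g f⁻¹`. -/
noncomputable def mirrorT (f g nu : ℚ⟦X⟧) (y : Polynomial ℚ⟦X⟧) : Polynomial ℚ⟦X⟧ :=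
  y.sum fun i a =>
    (Polynomial.X - Polynomial.C (psComp (g * f⁻¹) nu)) ^ i *
      Polynomial.C (psComp (a * f⁻¹) nu)

/-!
The Picard–Fuchs recursion determines, order by order in `q`, the holomorphic period `f`, the
logarithmic period `g` and a third solution `t²f + 2tg + w`. The mirror transform of the latter is
`s² + W` with `W = (w/f)(ν) - ((g/f)(ν))²`, so the hypothesis on `K` says that `D²` kills
`K⁻¹(D²W + 2)`; being a power series, it is then the constant `2/14`, i.e. `K = 7(D²W + 2)`.

What remains is to compute six coefficients. Series are followed through their jets (lists of
their first coefficients), computed exactly over `ℚ`. The series that are only given implicitly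
(`f`, `g`, `w`, `f⁻¹`, `ν`) are pinned down by checking a candidate jet against a triangular
system with invertible diagonal: `L1` acts on `qⁿ` as `n⁴` plus lower order terms, and
composition with `μ = q + O(q²)` is unitriangular.
-/

open PowerSeries

def HasJet {R : Type*} [Semiring R] (N : ℕ) (a : R⟦X⟧) (l : List R) : Prop :=
  ∀ k < N, coeff k a = l.getD k 0

namespace Jet

section Semiring

variable {R : Type*} [Semiring R]

def tab (N : ℕ) (c : ℕ → R) : List R := (List.range N).map c

lemma getD_tab {N k : ℕ} (c : ℕ → R) (hk : k < N) : (tab N c).getD k 0 = c k := by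
  simp [tab, hk]

def add (N : ℕ) (l m : List R) : List R := tab N fun k => l.getD k 0 + m.getD k 0

def mul (N : ℕ) (l m : List R) : List R :=
  tab N fun k => ∑ i ∈ Finset.range (k + 1), l.getD i 0 * m.getD (k - i) 0

def pow (N : ℕ) (l : List R) (n : ℕ) : List R := (mul N l)^[n] [1]

end Semiring

section Ring

variable {R : Type*} [Ring R]

def sub (N : ℕ) (l m : List R) : List R := tab N fun k => l.getD k 0 - m.getD k 0

def neg (N : ℕ) (l : List R) : List R := tab N fun k => -l.getD k 0

end Ring

def D (N : ℕ) (l : List ℚ) : List ℚ := tab N fun k => k * l.getD k 0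

def comp (N : ℕ) (l m : List ℚ) : List ℚ :=
  tab N fun k => ∑ n ∈ Finset.range (k + 1), l.getD n 0 * (pow N m n).getD k 0

def exp (N : ℕ) : List ℚ := tab N fun k => 1 / k.factorial

end Jet

section Semiring

variable {R : Type*} [Semiring R]

noncomputable def ofJet (l : List R) : R⟦X⟧ := mk fun k => l.getD k 0

lemma hasJet_ofJet (N : ℕ) (l : List R) : HasJet N (ofJet l) l := fun _ _ => coeff_mk _ _

lemma ofJet_nil : ofJet ([] : List R) = 0 := by ext; simp [ofJet]

lemma ofJet_cons (c : R) (l : List R) : ofJet (c :: l) = C c + X * ofJet l := by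
  ext (_ | _) <;> simp [ofJet, coeff_succ_X_mul]

lemma hasJet_zero (N : ℕ) : HasJet N (0 : R⟦X⟧) [] := fun _ _ => by simp

lemma hasJet_C (N : ℕ) (c : R) : HasJet N (C c) [c] := by
  simpa [ofJet_cons, ofJet_nil] using hasJet_ofJet N [c]

lemma hasJet_ofNat (N c : ℕ) [c.AtLeastTwo] :
    HasJet N (OfNat.ofNat c : R⟦X⟧) [(OfNat.ofNat c : R)] := by
  rw [← map_ofNat C c]; exact hasJet_C N _

lemma hasJet_X (N : ℕ) : HasJet N (X : R⟦X⟧) [0, 1] := by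
  simpa [ofJet_cons, ofJet_nil] using hasJet_ofJet N [(0 : R), 1]

namespace HasJet

variable {N : ℕ} {a b : R⟦X⟧} {l m : List R}

lemma congr (h : HasJet N a l) (hlm : ∀ k < N, l.getD k 0 = m.getD k 0) : HasJet N a m :=
  fun k hk => (h k hk).trans (hlm k hk)

lemma add (ha : HasJet N a l) (hb : HasJet N b m) : HasJet N (a + b) (Jet.add N l m) :=
  fun k hk => by rw [Jet.add, Jet.getD_tab _ hk, map_add, ha k hk, hb k hk]

lemma mul (ha : HasJet N a l) (hb : HasJet N b m) : HasJet N (a * b) (Jet.mul N l m) :=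
  fun k hk => by
    rw [Jet.mul, Jet.getD_tab _ hk, coeff_mul, Finset.Nat.sum_antidiagonal_eq_sum_range_succ_mk]
    refine Finset.sum_congr rfl fun i hi => ?_
    have hi : i ≤ k := Nat.lt_succ_iff.1 (Finset.mem_range.1 hi)
    rw [ha i (by omega), hb (k - i) (by omega)]

lemma pow (ha : HasJet N a l) (n : ℕ) : HasJet N (a ^ n) (Jet.pow N l n) := by
  induction n with
  | zero => simpa [Jet.pow] using hasJet_C N (1 : R)
  | succ n ih => rw [pow_succ', Jet.pow, Function.iterate_succ_apply']; exact ha.mul ih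

end HasJet

end Semiring

namespace HasJet

section Ring

variable {R : Type*} [Ring R] {N : ℕ} {a b : R⟦X⟧} {l m : List R}

lemma sub (ha : HasJet N a l) (hb : HasJet N b m) : HasJet N (a - b) (Jet.sub N l m) :=
  fun k hk => by rw [Jet.sub, Jet.getD_tab _ hk, map_sub, ha k hk, hb k hk]

lemma neg (ha : HasJet N a l) : HasJet N (-a) (Jet.neg N l) :=
  fun k hk => by rw [Jet.neg, Jet.getD_tab _ hk, map_neg, ha k hk]

lemma X_pow_dvd_sub (ha : HasJet N a l) (hb : HasJet N b l) : X ^ N ∣ a - b :=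
  X_pow_dvd_iff.2 fun k hk => by rw [map_sub, ha k hk, hb k hk, sub_self]

lemma of_X_pow_dvd_sub (hb : HasJet N b l) (h : X ^ N ∣ a - b) : HasJet N a l := fun k hk => by
  rw [← hb k hk, ← sub_eq_zero, ← map_sub]; exact X_pow_dvd_iff.1 h k hk

end Ring

lemma of_mul {R : Type*} [CommRing R] {N : ℕ} {a b : R⟦X⟧} {l m : List R} (ha : HasJet N a l)
    (ha₀ : IsUnit (constantCoeff a)) (h : HasJet N (a * b) (Jet.mul N l m)) : HasJet N b m := by
  refine (hasJet_ofJet N m).of_X_pow_dvd_sub ?_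
  have hdvd := h.X_pow_dvd_sub (ha.mul (hasJet_ofJet N m))
  rwa [← mul_sub, (isUnit_iff_constantCoeff.2 ha₀).dvd_mul_left] at hdvd

end HasJet

lemma hasJet_exp (N : ℕ) : HasJet N (exp ℚ) (Jet.exp N) := fun k hk => by
  rw [coeff_exp, Jet.exp, Jet.getD_tab _ hk]; simp

lemma coeff_Dop (u : ℚ⟦X⟧) (n : ℕ) : coeff n (Dop u) = n * coeff n u := by
  cases n with
  | zero => simp [Dop]
  | succ m => rw [Dop, coeff_succ_X_mul, coeff_derivative]; push_cast; ring

lemma coeff_iterate_Dop (j : ℕ) (u : ℚ⟦X⟧) (n : ℕ) :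
    coeff n (Dop^[j] u) = (n : ℚ) ^ j * coeff n u := by
  induction j with
  | zero => simp
  | succ j ih => rw [Function.iterate_succ_apply', coeff_Dop, ih, pow_succ]; ring

lemma Dop_add (a b : ℚ⟦X⟧) : Dop (a + b) = Dop a + Dop b := by
  rw [Dop, Dop, Dop, map_add, mul_add]

lemma Dop_sub (a b : ℚ⟦X⟧) : Dop (a - b) = Dop a - Dop b := by
  rw [Dop, Dop, Dop, map_sub, mul_sub]

lemma Dop_two_mul (a : ℚ⟦X⟧) : Dop (2 * a) = 2 * Dop a := by
  rw [two_mul, Dop_add, two_mul]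

lemma Dop_C (c : ℚ) : Dop (C c) = 0 := by simp [Dop]

lemma Dop_one : Dop 1 = 0 := by rw [← map_one C]; exact Dop_C 1

lemma Dop_zero : Dop 0 = 0 := by simp [Dop]

lemma Dop_two : Dop 2 = 0 := by rw [← map_ofNat C 2]; exact Dop_C 2

lemma constantCoeff_Dop (u : ℚ⟦X⟧) : constantCoeff (Dop u) = 0 := by simp [Dop]

lemma iterate_Dop_sub (j : ℕ) (a b : ℚ⟦X⟧) : Dop^[j] (a - b) = Dop^[j] a - Dop^[j] b := by
  induction j with
  | zero => rfl
  | succ j ih => simp only [Function.iterate_succ_apply', ih, Dop_sub]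

lemma iterate_Dop_add (j : ℕ) (a b : ℚ⟦X⟧) : Dop^[j] (a + b) = Dop^[j] a + Dop^[j] b := by
  induction j with
  | zero => rfl
  | succ j ih => simp only [Function.iterate_succ_apply', ih, Dop_add]

lemma eq_C_of_Dop_Dop_eq_zero {u : ℚ⟦X⟧} (h : Dop (Dop u) = 0) : u = C (constantCoeff u) := by
  ext (_ | n)
  · simp
  · have hn := congrArg (coeff (n + 1)) h
    rw [coeff_Dop, coeff_Dop, map_zero, ← mul_assoc, mul_eq_zero] at hn
    rw [coeff_C, if_neg n.succ_ne_zero]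
    exact hn.resolve_left (by positivity)

lemma HasJet.Dop {N : ℕ} {a : ℚ⟦X⟧} {l : List ℚ} (ha : HasJet N a l) :
    HasJet N (Dop a) (Jet.D N l) := fun k hk => by
  rw [coeff_Dop, Jet.D, Jet.getD_tab _ hk, ha k hk]

lemma HasJet.iterate_Dop {N : ℕ} {a : ℚ⟦X⟧} {l : List ℚ} (ha : HasJet N a l) (j : ℕ) :
    HasJet N (_root_.Dop^[j] a) ((Jet.D N)^[j] l) := by
  induction j with
  | zero => exact ha
  | succ j ih => rw [Function.iterate_succ_apply', Function.iterate_succ_apply']; exact ih.Dop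

lemma psComp_sub (u v μ : ℚ⟦X⟧) : psComp (u - v) μ = psComp u μ - psComp v μ := by
  ext k; simp [psComp, sub_mul, Finset.sum_sub_distrib]

lemma psComp_add (u v μ : ℚ⟦X⟧) : psComp (u + v) μ = psComp u μ + psComp v μ := by
  ext k; simp [psComp, add_mul, Finset.sum_add_distrib]

lemma psComp_zero (μ : ℚ⟦X⟧) : psComp 0 μ = 0 := by
  ext k; simp [psComp]

lemma psComp_one (μ : ℚ⟦X⟧) : psComp 1 μ = 1 := by
  ext k
  rw [psComp, coeff_mk, Finset.sum_eq_single 0 (fun n _ hn => by simp [coeff_one, hn]) (by simp)]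
  simp

lemma coeff_pow_self {μ : ℚ⟦X⟧} (hμ : constantCoeff μ = 0) (k : ℕ) :
    coeff k (μ ^ k) = coeff 1 μ ^ k := by
  obtain ⟨ν, rfl⟩ := X_dvd_iff.2 hμ
  rw [mul_pow, coeff_X_pow_mul', if_pos le_rfl, Nat.sub_self, coeff_zero_eq_constantCoeff,
    map_pow, coeff_succ_X_mul, coeff_zero_eq_constantCoeff]

lemma HasJet.psComp {N : ℕ} {a b : ℚ⟦X⟧} {l m : List ℚ} (ha : HasJet N a l)
    (hb : HasJet N b m) : HasJet N (_root_.psComp a b) (Jet.comp N l m) := fun k hk => by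
  rw [_root_.psComp, coeff_mk, Jet.comp, Jet.getD_tab _ hk]
  refine Finset.sum_congr rfl fun n hn => ?_
  have hn : n ≤ k := Nat.lt_succ_iff.1 (Finset.mem_range.1 hn)
  rw [ha n (by omega), hb.pow n k hk]

lemma X_pow_dvd_of_X_pow_dvd_psComp {N : ℕ} {v μ : ℚ⟦X⟧} (hμ₀ : constantCoeff μ = 0)
    (hμ₁ : coeff 1 μ = 1) (h : X ^ N ∣ psComp v μ) : X ^ N ∣ v := by
  rw [X_pow_dvd_iff] at h ⊢
  intro k
  induction k using Nat.strong_induction_on with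
  | _ k ih =>
    intro hk
    have hk' := h k hk
    rwa [psComp, coeff_mk, Finset.sum_range_succ,
      Finset.sum_eq_zero fun n hn => by
        have hnk := Finset.mem_range.1 hn
        rw [ih n hnk (by omega), zero_mul],
      coeff_pow_self hμ₀, hμ₁, one_pow, mul_one, zero_add] at hk'

lemma HasJet.of_psComp {N : ℕ} {v μ : ℚ⟦X⟧} {l m : List ℚ} (hμ : HasJet N μ m)
    (hμ₀ : constantCoeff μ = 0) (hμ₁ : coeff 1 μ = 1)
    (h : HasJet N (_root_.psComp v μ) (Jet.comp N l m)) : HasJet N v l :=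
  (hasJet_ofJet N l).of_X_pow_dvd_sub <| X_pow_dvd_of_X_pow_dvd_psComp hμ₀ hμ₁ <| by
    rw [psComp_sub]; exact h.X_pow_dvd_sub ((hasJet_ofJet N l).psComp hμ)

def A4Jet : List ℚ := [1, -295, 1686, -2258, -519, 9]
def A3Jet : List ℚ := [0, -572, 1488, 1032, -1056, 36]
def A2Jet : List ℚ := [0, -424, -946, 1450, -870, 54]
def A1Jet : List ℚ := [0, -138, -962, 318, -342, 36]
def A0Jet : List ℚ := [0, -17, -202, -8, -54, 9]

lemma A4_eq : A4 = ofJet A4Jet := by simp [A4, A4Jet, ofJet_cons, ofJet_nil, map_ofNat]; ring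
lemma A3_eq : A3 = ofJet A3Jet := by simp [A3, A3Jet, ofJet_cons, ofJet_nil, map_ofNat]; ring
lemma A2_eq : A2 = ofJet A2Jet := by simp [A2, A2Jet, ofJet_cons, ofJet_nil, map_ofNat]; ring
lemma A1_eq : A1 = ofJet A1Jet := by simp [A1, A1Jet, ofJet_cons, ofJet_nil, map_ofNat]; ring
lemma A0_eq : A0 = ofJet A0Jet := by simp [A0, A0Jet, ofJet_cons, ofJet_nil, map_ofNat]; ring

/-- `L1'` and `L1''` are the first and second derivatives of `L1 = ∑ Aᵢ Dⁱ` in `D`; they appear in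
`L1t` because `Dt (t u) = t D u + u` (see `L1t_quadT`). -/
noncomputable def L1' (u : ℚ⟦X⟧) : ℚ⟦X⟧ :=
  4 * A4 * Dop^[3] u + 3 * A3 * Dop^[2] u + 2 * A2 * Dop u + A1 * u

noncomputable def L1'' (u : ℚ⟦X⟧) : ℚ⟦X⟧ :=
  12 * A4 * Dop^[2] u + 6 * A3 * Dop u + 2 * A2 * u

namespace Jet

def L1 (N : ℕ) (l : List ℚ) : List ℚ :=
  add N (add N (add N (add N (mul N A4Jet ((D N)^[4] l)) (mul N A3Jet ((D N)^[3] l)))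
    (mul N A2Jet ((D N)^[2] l))) (mul N A1Jet (D N l))) (mul N A0Jet l)

def L1' (N : ℕ) (l : List ℚ) : List ℚ :=
  add N (add N (add N (mul N (mul N [4] A4Jet) ((D N)^[3] l))
    (mul N (mul N [3] A3Jet) ((D N)^[2] l))) (mul N (mul N [2] A2Jet) (D N l))) (mul N A1Jet l)

def L1'' (N : ℕ) (l : List ℚ) : List ℚ :=
  add N (add N (mul N (mul N [12] A4Jet) ((D N)^[2] l)) (mul N (mul N [6] A3Jet) (D N l)))
    (mul N (mul N [2] A2Jet) l)

end Jet

namespace HasJet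

variable {N : ℕ} {u : ℚ⟦X⟧} {l : List ℚ}

lemma L1 (h : HasJet N u l) : HasJet N (_root_.L1 u) (Jet.L1 N l) := by
  rw [_root_.L1, Jet.L1, A4_eq, A3_eq, A2_eq, A1_eq, A0_eq]
  have hA := hasJet_ofJet (R := ℚ) N
  exact ((((hA _).mul (h.iterate_Dop 4)).add ((hA _).mul (h.iterate_Dop 3))).add
    ((hA _).mul (h.iterate_Dop 2))).add ((hA _).mul h.Dop) |>.add ((hA _).mul h)

lemma L1' (h : HasJet N u l) : HasJet N (_root_.L1' u) (Jet.L1' N l) := by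
  rw [_root_.L1', Jet.L1', A4_eq, A3_eq, A2_eq, A1_eq]
  have hA := hasJet_ofJet (R := ℚ) N
  exact (((((hasJet_ofNat (R := ℚ) N 4).mul (hA _)).mul (h.iterate_Dop 3)).add
    (((hasJet_ofNat (R := ℚ) N 3).mul (hA _)).mul (h.iterate_Dop 2))).add
    (((hasJet_ofNat (R := ℚ) N 2).mul (hA _)).mul h.Dop)).add ((hA _).mul h)

lemma L1'' (h : HasJet N u l) : HasJet N (_root_.L1'' u) (Jet.L1'' N l) := by
  rw [_root_.L1'', Jet.L1'', A4_eq, A3_eq, A2_eq]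
  have hA := hasJet_ofJet (R := ℚ) N
  exact ((((hasJet_ofNat (R := ℚ) N 12).mul (hA _)).mul (h.iterate_Dop 2)).add
    (((hasJet_ofNat (R := ℚ) N 6).mul (hA _)).mul h.Dop)).add
    (((hasJet_ofNat (R := ℚ) N 2).mul (hA _)).mul h)

end HasJet

noncomputable def L1Entry (n m : ℕ) : ℚ :=
  coeff m A4 * ((n - m : ℕ) : ℚ) ^ 4 + coeff m A3 * ((n - m : ℕ) : ℚ) ^ 3
    + coeff m A2 * ((n - m : ℕ) : ℚ) ^ 2 + coeff m A1 * ((n - m : ℕ) : ℚ) + coeff m A0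

lemma coeff_L1 (u : ℚ⟦X⟧) (n : ℕ) :
    coeff n (L1 u) = ∑ m ∈ Finset.range (n + 1), L1Entry n m * coeff (n - m) u := by
  simp only [L1, map_add, coeff_mul, Finset.Nat.sum_antidiagonal_eq_sum_range_succ_mk,
    coeff_iterate_Dop, coeff_Dop, ← Finset.sum_add_distrib]
  refine Finset.sum_congr rfl fun m _ => ?_
  rw [L1Entry]; ring

lemma L1Entry_diag (n : ℕ) : L1Entry n 0 = (n : ℚ) ^ 4 := by
  simp [L1Entry, A4_eq, A3_eq, A2_eq, A1_eq, A0_eq, ofJet, A4Jet, A3Jet, A2Jet, A1Jet, A0Jet]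

lemma L1_sub (a b : ℚ⟦X⟧) : L1 (a - b) = L1 a - L1 b := by
  simp only [L1, iterate_Dop_sub, Dop_sub]; ring

lemma X_pow_dvd_of_X_pow_dvd_L1 {N : ℕ} {v : ℚ⟦X⟧} (hv₀ : constantCoeff v = 0)
    (h : X ^ N ∣ L1 v) : X ^ N ∣ v := by
  rw [X_pow_dvd_iff] at h ⊢
  intro k
  induction k using Nat.strong_induction_on with
  | _ k ih =>
    intro hk
    rcases k.eq_zero_or_pos with rfl | hpos
    · simpa using hv₀
    have hk' := h k hk
    rw [coeff_L1, Finset.sum_range_succ', Finset.sum_eq_zero fun m hm => by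
        have hmk := Finset.mem_range.1 hm
        rw [ih (k - (m + 1)) (by omega) (by omega), mul_zero],
      zero_add, L1Entry_diag, Nat.sub_zero, mul_eq_zero] at hk'
    exact hk'.resolve_left (by positivity)

lemma HasJet.of_L1 {N : ℕ} {u : ℚ⟦X⟧} {l : List ℚ} (h : HasJet N (_root_.L1 u) (Jet.L1 N l))
    (h₀ : constantCoeff u = l.getD 0 0) : HasJet N u l := by
  refine (hasJet_ofJet N l).of_X_pow_dvd_sub <| X_pow_dvd_of_X_pow_dvd_L1 ?_ ?_
  · simp [h₀, ofJet]
  · rw [L1_sub]; exact h.X_pow_dvd_sub (hasJet_ofJet N l).L1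

noncomputable def L1PreimageCoeff (r : ℚ⟦X⟧) : ℕ → ℚ
  | 0 => 0
  | n + 1 => (coeff (n + 1) r - ∑ i ∈ Finset.range (n + 1),
      L1Entry (n + 1) (i + 1) * L1PreimageCoeff r (n - i)) / ((n : ℚ) + 1) ^ 4
decreasing_by omega

lemma exists_L1_eq {r : ℚ⟦X⟧} (hr : constantCoeff r = 0) :
    ∃ w, constantCoeff w = 0 ∧ L1 w = r := by
  refine ⟨mk (L1PreimageCoeff r), by simp [L1PreimageCoeff], ?_⟩
  ext (_ | n)
  · simp [coeff_L1, hr, L1PreimageCoeff]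
  · rw [coeff_L1, Finset.sum_range_succ', L1Entry_diag, coeff_mk, Nat.sub_zero,
      L1PreimageCoeff]
    have hs : ∀ i, n + 1 - (i + 1) = n - i := fun i => by omega
    simp only [coeff_mk, hs]
    push_cast
    field_simp
    ring

noncomputable def quadT (a b c : ℚ⟦X⟧) : Polynomial ℚ⟦X⟧ :=
  Polynomial.C a * Polynomial.X ^ 2 + Polynomial.C b * Polynomial.X + Polynomial.C c

lemma quadT_eq_zero_iff {a b c : ℚ⟦X⟧} : quadT a b c = 0 ↔ a = 0 ∧ b = 0 ∧ c = 0 := by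
  refine ⟨fun h => ⟨?_, ?_, ?_⟩, fun ⟨ha, hb, hc⟩ => by simp [quadT, ha, hb, hc]⟩
  · simpa [quadT] using congrArg (Polynomial.coeff · 2) h
  · simpa [quadT] using congrArg (Polynomial.coeff · 1) h
  · simpa [quadT] using congrArg (Polynomial.coeff · 0) h

lemma quadT_zero_zero (c : ℚ⟦X⟧) : quadT 0 0 c = Polynomial.C c := by
  simp [quadT]

lemma Dt_add (y z : Polynomial ℚ⟦X⟧) : Dt (y + z) = Dt y + Dt z := by
  rw [Dt, Dt, Dt, map_add, Polynomial.sum_add_index _ _ _ (fun _ => by simp [Dop])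
    (fun _ _ _ => by rw [Dop_add, map_add, add_mul])]
  ring

lemma Dt_C_mul_X_pow (a : ℚ⟦X⟧) (k : ℕ) :
    Dt (Polynomial.C a * Polynomial.X ^ k) =
      Polynomial.C (k * a) * Polynomial.X ^ (k - 1) + Polynomial.C (Dop a) * Polynomial.X ^ k := by
  rw [Dt, Polynomial.C_mul_X_pow_eq_monomial, Polynomial.sum_monomial_index _ _ (by simp [Dop]),
    Polynomial.derivative_monomial, ← Polynomial.C_mul_X_pow_eq_monomial]
  simp only [map_mul, map_natCast]
  ring

lemma Dt_C (a : ℚ⟦X⟧) : Dt (Polynomial.C a) = Polynomial.C (Dop a) := by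
  simpa using Dt_C_mul_X_pow a 0

lemma Dt_quadT (a b c : ℚ⟦X⟧) :
    Dt (quadT a b c) = quadT (Dop a) (Dop b + 2 * a) (Dop c + b) := by
  have h1 := Dt_C_mul_X_pow b 1
  have h2 := Dt_C_mul_X_pow a 2
  simp only [pow_one, Nat.cast_one, one_mul, Nat.cast_ofNat] at h1 h2
  rw [quadT, Dt_add, Dt_add, h1, h2, Dt_C, quadT]
  simp only [map_add, map_mul]
  ring

lemma L1_add (a b : ℚ⟦X⟧) : L1 (a + b) = L1 a + L1 b := by
  simp only [L1, iterate_Dop_add, Dop_add]; ring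

lemma L1'_add (a b : ℚ⟦X⟧) : L1' (a + b) = L1' a + L1' b := by
  simp only [L1', iterate_Dop_add, Dop_add]; ring

lemma L1t_quadT (a b c : ℚ⟦X⟧) :
    L1t (quadT a b c) =
      quadT (L1 a) (L1 b + 2 * L1' a) (L1 c + L1' b + L1'' a) := by
  simp only [L1t, L1, L1', L1'', Function.iterate_succ_apply', Function.iterate_zero_apply,
    Dt_quadT, Dop_add, Dop_two_mul]
  simp only [quadT, map_add, map_mul, map_ofNat]
  ring

lemma mirrorT_quadT (f g nu a b c : ℚ⟦X⟧) :
    mirrorT f g nu (quadT a b c) =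
      (Polynomial.X - Polynomial.C (psComp (g * f⁻¹) nu)) ^ 2
          * Polynomial.C (psComp (a * f⁻¹) nu)
        + (Polynomial.X - Polynomial.C (psComp (g * f⁻¹) nu))
          * Polynomial.C (psComp (b * f⁻¹) nu)
        + Polynomial.C (psComp (c * f⁻¹) nu) := by
  rw [mirrorT]
  set e := Polynomial.X - Polynomial.C (psComp (g * f⁻¹) nu)
  have h0 : ∀ i : ℕ, e ^ i * Polynomial.C (psComp (0 * f⁻¹) nu) = 0 := fun i => by
    rw [zero_mul, psComp_zero, map_zero, mul_zero]
  have hadd : ∀ (i : ℕ) (a₁ a₂ : ℚ⟦X⟧), e ^ i * Polynomial.C (psComp ((a₁ + a₂) * f⁻¹) nu)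
      = e ^ i * Polynomial.C (psComp (a₁ * f⁻¹) nu)
        + e ^ i * Polynomial.C (psComp (a₂ * f⁻¹) nu) := fun i a₁ a₂ => by
    rw [add_mul, psComp_add, map_add, mul_add]
  rw [quadT, Polynomial.sum_add_index _ _ _ h0 hadd,
    Polynomial.sum_add_index _ _ _ h0 hadd, Polynomial.C_mul_X_pow_eq_monomial,
    Polynomial.C_mul_X_eq_monomial, Polynomial.sum_monomial_index _ _ (h0 2),
    Polynomial.sum_monomial_index _ _ (h0 1), Polynomial.sum_C_index (h0 0)]
  ring

def fJet : List ℚ := [1, 17, 1549, 215585, 36505501, 6921832517]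
def gJet : List ℚ := [0, 70, 7413, 3268573 / 3, 1138372375 / 6, 219551517059 / 6]
def wJet : List ℚ := [0, 84, 15687, 8128729 / 3, 6116318845 / 12, 30856223286133 / 300]
def fInvJet : List ℚ := [1, -17, -1260, -167832, -28035672, -5293023708]
def nuJet : List ℚ := [0, 1, -70, 1127, -47530, -3054373]
def KJet : List ℚ := [14, 588, 97412, 15765456, 2647082116, 451174262588]

noncomputable def mirrorW (f g w nu : ℚ⟦X⟧) : ℚ⟦X⟧ :=
  psComp (w * f⁻¹) nu - psComp (g * f⁻¹) nu ^ 2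

section

variable {f g w nu K W : ℚ⟦X⟧}

-- `Rat` arithmetic does not reduce in the elaborator, so jets are compared by `decide +kernel`.
lemma hasJet_f (hf₀ : constantCoeff f = 1) (hf : L1 f = 0) : HasJet 6 f fJet :=
  HasJet.of_L1 (hf ▸ (hasJet_zero 6).congr (by decide +kernel)) (by simp [hf₀, fJet])

lemma L1_eq_neg_L1'_of_L1t (hg : L1t (Polynomial.X * Polynomial.C f + Polynomial.C g) = 0) :
    L1 g = -L1' f := by
  have hq : Polynomial.X * Polynomial.C f + Polynomial.C g = quadT 0 f g := by
    simp only [quadT, map_zero, zero_mul, zero_add]; ring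
  rw [hq, L1t_quadT] at hg
  obtain ⟨-, -, h⟩ := quadT_eq_zero_iff.1 hg
  have h0 : L1'' 0 = 0 := by simp [L1'', Function.iterate_fixed Dop_zero, Dop_zero]
  rw [h0, add_zero] at h
  exact eq_neg_of_add_eq_zero_left h

lemma hasJet_g (hfJ : HasJet 6 f fJet) (hg₀ : constantCoeff g = 0) (hg : L1 g = -L1' f) :
    HasJet 6 g gJet :=
  HasJet.of_L1 (hg ▸ hfJ.L1'.neg.congr (by decide +kernel)) (by simp [hg₀, gJet])

lemma exists_L1t_quadT_eq_zero (hf : L1 f = 0) (hg : L1 g = -L1' f)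
    (hfJ : HasJet 6 f fJet) (hgJ : HasJet 6 g gJet) :
    ∃ w, L1t (quadT f (2 * g) w) = 0 ∧ HasJet 6 w wJet := by
  have hr := (hfJ.L1''.add ((hasJet_ofNat 6 2).mul hgJ.L1')).neg
  obtain ⟨w, hw₀, hw⟩ := exists_L1_eq (r := -(L1'' f + 2 * L1' g)) <| by
    rw [← coeff_zero_eq_constantCoeff_apply]; exact (hr 0 (by norm_num)).trans (by decide +kernel)
  refine ⟨w, ?_, HasJet.of_L1 (hw ▸ hr.congr (by decide +kernel)) (by simp [hw₀, wJet])⟩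
  rw [L1t_quadT, two_mul, L1_add, L1'_add, hf, hg, hw, quadT_eq_zero_iff]
  exact ⟨rfl, by ring, by ring⟩

lemma hasJet_inv (hfJ : HasJet 6 f fJet) : HasJet 6 f⁻¹ fInvJet := by
  have hf₀ : constantCoeff f ≠ 0 := by
    rw [← coeff_zero_eq_constantCoeff_apply, hfJ 0 (by norm_num)]; norm_num [fJet]
  refine hfJ.of_mul hf₀.isUnit ?_
  rw [PowerSeries.mul_inv_cancel f hf₀, ← map_one C]
  exact (hasJet_C 6 1).congr (by decide +kernel)

lemma hasJet_nu (hgJ : HasJet 6 g gJet) (hfiJ : HasJet 6 f⁻¹ fInvJet)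
    (hnu : psComp nu (mirrorMap f g) = X) : HasJet 6 nu nuJet := by
  have hμ : HasJet 6 (mirrorMap f g) _ :=
    (hasJet_X 6).mul ((hasJet_exp 6).psComp (hgJ.mul hfiJ))
  refine hμ.of_psComp ?_ ?_ (by rw [hnu]; exact (hasJet_X 6).congr (by decide +kernel))
  · rw [← coeff_zero_eq_constantCoeff_apply, hμ 0 (by norm_num)]; decide +kernel
  · rw [hμ 1 (by norm_num)]; decide +kernel

lemma mirrorT_quadT_eq_mirrorW (hf : f * f⁻¹ = 1) :
    mirrorT f g nu (quadT f (2 * g) w) = quadT 1 0 (mirrorW f g w nu) := by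
  rw [mirrorT_quadT, hf, psComp_one, mul_assoc, two_mul, psComp_add, mirrorW, quadT]
  simp only [map_sub, map_add, map_pow, map_one, map_zero]
  ring

lemma K_eq_of_Dt_eq_zero (hK₀ : constantCoeff K = 14)
    (h : Dt (Dt (Polynomial.C K⁻¹ * Dt (Dt (quadT 1 0 W)))) = 0) :
    K = 7 * (Dop (Dop W) + 2) := by
  simp only [Dt_quadT, Dop_one, Dop_zero, Dop_two, mul_zero, mul_one, zero_add, add_zero,
    quadT_zero_zero, ← map_mul, Dt_C, Polynomial.C_eq_zero] at h
  have hv : K⁻¹ * (Dop (Dop W) + 2) = C (1 / 7) := by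
    rw [eq_C_of_Dop_Dop_eq_zero h, map_mul, map_add, constantCoeff_Dop, constantCoeff_inv, hK₀,
      map_ofNat]
    norm_num
  have hKK : K * K⁻¹ = 1 := PowerSeries.mul_inv_cancel K (by rw [hK₀]; norm_num)
  calc K = K * (7 * C (1 / 7)) := by rw [← map_ofNat C 7, ← map_mul]; norm_num
    _ = 7 * (K * K⁻¹ * (Dop (Dop W) + 2)) := by rw [mul_assoc K, hv]; ring
    _ = 7 * (Dop (Dop W) + 2) := by rw [hKK, one_mul]

lemma hasJet_K (hwJ : HasJet 6 w wJet) (hgJ : HasJet 6 g gJet) (hfiJ : HasJet 6 f⁻¹ fInvJet)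
    (hnuJ : HasJet 6 nu nuJet) (hK : K = 7 * (Dop (Dop (mirrorW f g w nu)) + 2)) :
    HasJet 6 K KJet := by
  have hW := ((hwJ.mul hfiJ).psComp hnuJ).sub (((hgJ.mul hfiJ).psComp hnuJ).pow 2)
  rw [hK]
  exact ((hasJet_ofNat 6 7).mul (hW.Dop.Dop.add (hasJet_ofNat 6 2))).congr (by decide +kernel)

end

lemma instanton_numbers_of_hasJet {K : ℚ⟦X⟧} (hKJ : HasJet 6 K KJet) (n : ℕ → ℚ)
    (hn : ∀ d : ℕ, 1 ≤ d → d ≤ 5 → coeff d K = ∑ k ∈ Nat.divisors d, (k : ℚ) ^ 3 * n k) :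
    n 1 = 588 ∧ n 2 = 12103 ∧ n 3 = 583884 ∧ n 4 = 41359136 ∧ n 5 = 3609394096 := by
  have e : ∀ d, 1 ≤ d → d ≤ 5 → KJet.getD d 0 = ∑ k ∈ Nat.divisors d, (k : ℚ) ^ 3 * n k :=
    fun d h₁ h₅ => (hKJ d (by omega)).symm.trans (hn d h₁ h₅)
  have e1 := e 1 le_rfl (by norm_num)
  have e2 := e 2 (by norm_num) (by norm_num)
  have e3 := e 3 (by norm_num) (by norm_num)
  have e4 := e 4 (by norm_num) (by norm_num)
  have e5 := e 5 (by norm_num) le_rfl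
  rw [show Nat.divisors 1 = {1} by decide] at e1
  rw [show Nat.divisors 2 = {1, 2} by decide] at e2
  rw [show Nat.divisors 3 = {1, 3} by decide] at e3
  rw [show Nat.divisors 4 = {1, 2, 4} by decide] at e4
  rw [show Nat.divisors 5 = {1, 5} by decide] at e5
  norm_num [KJet] at e1 e2 e3 e4 e5
  refine ⟨by linarith, by linarith, by linarith, by linarith, by linarith⟩

theorem pfaffian_instanton_numbers_general (f g nu K : ℚ⟦X⟧)
    (hf₀ : constantCoeff f = 1) (hf : L1 f = 0)
    (hg₀ : constantCoeff g = 0)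
    (hg : L1t (Polynomial.X * Polynomial.C f + Polynomial.C g) = 0)
    (hnu : psComp nu (mirrorMap f g) = X)
    (hK₀ : constantCoeff K = 14)
    (hK : ∀ y : Polynomial ℚ⟦X⟧, L1t y = 0 →
      Dt (Dt (Polynomial.C K⁻¹ * Dt (Dt (mirrorT f g nu y)))) = 0)
    (n : ℕ → ℚ)
    (hn : ∀ d : ℕ, 1 ≤ d → d ≤ 5 →
      coeff d K = ∑ k ∈ Nat.divisors d, (k : ℚ) ^ 3 * n k) :
    n 1 = 588 ∧ n 2 = 12103 ∧ n 3 = 583884 ∧ n 4 = 41359136 ∧ n 5 = 3609394096 := by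
  have hfJ := hasJet_f hf₀ hf
  have hLg := L1_eq_neg_L1'_of_L1t hg
  have hgJ := hasJet_g hfJ hg₀ hLg
  obtain ⟨w, hy, hwJ⟩ := exists_L1t_quadT_eq_zero hf hLg hfJ hgJ
  have hfiJ := hasJet_inv hfJ
  have hKW : K = 7 * (Dop (Dop (mirrorW f g w nu)) + 2) := by
    refine K_eq_of_Dt_eq_zero hK₀ ?_
    rw [← mirrorT_quadT_eq_mirrorW (PowerSeries.mul_inv_cancel f (by simp [hf₀]))]
    exact hK _ hy
  exact instanton_numbers_of_hasJet (hasJet_K hwJ hgJ hfiJ (hasJet_nu hgJ hfiJ hnu) hKW) n hn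

/-- The instanton numbers of the Pfaffian Calabi-Yau 3-fold: if `K` is the power
series with constant coefficient `14` such that `D²(1/K)D²` annihilates the mirror
transforms of all Picard-Fuchs solutions, and `K = 14 + Σ_{d≥1} c_d Q^d` with
`c_d = Σ_{k ∣ d} k³ n_k` for `1 ≤ d ≤ 5`, then `n₁ = 588`, `n₂ = 12103`,
`n₃ = 583884`, `n₄ = 41359136`, `n₅ = 3609394096`. -/
theorem pfaffian_instanton_numbers (f g nu K : ℚ⟦X⟧)
    (hf₀ : constantCoeff f = 1) (hf : L1 f = 0)
    (hg₀ : constantCoeff g = 0)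
    (hg : L1t (Polynomial.X * Polynomial.C f + Polynomial.C g) = 0)
    (hnu₀ : constantCoeff nu = 0)
    (hnu : psComp nu (mirrorMap f g) = X)
    (hK₀ : constantCoeff K = 14)
    (hK : ∀ y : Polynomial ℚ⟦X⟧, L1t y = 0 →
      Dt (Dt (Polynomial.C K⁻¹ * Dt (Dt (mirrorT f g nu y)))) = 0)
    (n : ℕ → ℚ)
    (hn : ∀ d : ℕ, 1 ≤ d → d ≤ 5 →
      coeff d K = ∑ k ∈ Nat.divisors d, (k : ℚ) ^ 3 * n k) :
    n 1 = 588 ∧ n 2 = 12103 ∧ n 3 = 583884 ∧ n 4 = 41359136 ∧ n 5 = 3609394096 :=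
  pfaffian_instanton_numbers_general f g nu K hf₀ hf hg₀ hg hnu hK₀ hK n hn
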